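/- arXiv:0901.3064 — 3 statements merged into one kernel-verified Lean document; each statement's English description precedes it below -/
import Mathlib

section
/- Let π be any group. For s, t ∈ π one has the pointwise identity χ_s · χ_t = −χ_{st} − χ_{s⁻¹t} of functions on the set of group homomorphisms π → SL(2,ℂ); consequently the ℂ-linear span of the family {χ_t : t ∈ π} inside the algebra of complex-valued functions on Hom(π, SL(2,ℂ)) is closed under pointwise multiplication, i.e. it is a subalgebra (the algebra of trace functions Tf(π, SL(2,ℂ))). -/
/-- For a group `π` and `t ∈ π`, the trace function `χ_t` on `Hom(π, SL(2,ℂ))`,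
`χ_t(ρ) = -tr(ρ(t))`. -/
noncomputable def traceFun (π : Type*) [Group π] (t : π)
    (ρ : π →* Matrix.SpecialLinearGroup (Fin 2) ℂ) : ℂ :=
  -Matrix.trace ((ρ t : Matrix.SpecialLinearGroup (Fin 2) ℂ) : Matrix (Fin 2) (Fin 2) ℂ)

lemma traceFun_key (π : Type*) [Group π] (s t : π)
    (ρ : π →* Matrix.SpecialLinearGroup (Fin 2) ℂ) :
    traceFun π s ρ * traceFun π t ρ = -traceFun π (s * t) ρ - traceFun π (s⁻¹ * t) ρ := by
  have hst : (ρ (s * t) : Matrix (Fin 2) (Fin 2) ℂ) = (ρ s : Matrix (Fin 2) (Fin 2) ℂ) * ρ t := by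
    simp [map_mul]
  have hinv : (ρ (s⁻¹ * t) : Matrix (Fin 2) (Fin 2) ℂ) =
      Matrix.adjugate (ρ s : Matrix (Fin 2) (Fin 2) ℂ) * ρ t := by
    rw [map_mul, map_inv]
    simp [Matrix.SpecialLinearGroup.coe_inv]
  simp only [traceFun, hst, hinv, Matrix.adjugate_fin_two]
  have hdet : Matrix.det (ρ s : Matrix (Fin 2) (Fin 2) ℂ) = 1 := (ρ s).2
  rw [Matrix.det_fin_two] at hdet
  simp only [Matrix.trace_fin_two, Matrix.mul_apply, Fin.sum_univ_two, Matrix.of_apply,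
    Matrix.cons_val', Matrix.cons_val_zero, Matrix.cons_val_one, Matrix.head_cons,
    Matrix.empty_val', Matrix.cons_val_fin_one, Matrix.head_fin_const]
  ring

/-- The pointwise identity `χ_s · χ_t = -χ_{st} - χ_{s⁻¹t}`, and the consequence that the
ℂ-linear span of the `χ_t` inside the algebra of complex valued functions on
`Hom(π, SL(2,ℂ))` is closed under pointwise multiplication. -/
theorem traceFun_mul_and_span_closed (π : Type*) [Group π] :
    (∀ s t : π, ∀ ρ : π →* Matrix.SpecialLinearGroup (Fin 2) ℂ,
      traceFun π s ρ * traceFun π t ρ = -traceFun π (s * t) ρ - traceFun π (s⁻¹ * t) ρ) ∧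
    (∀ f g : (π →* Matrix.SpecialLinearGroup (Fin 2) ℂ) → ℂ,
      f ∈ Submodule.span ℂ (Set.range (traceFun π)) →
      g ∈ Submodule.span ℂ (Set.range (traceFun π)) →
      f * g ∈ Submodule.span ℂ (Set.range (traceFun π))) := by
  refine ⟨traceFun_key π, ?_⟩
  intro f g hf hg
  induction hf using Submodule.span_induction with
  | mem x hx =>
    obtain ⟨s, rfl⟩ := hx
    induction hg using Submodule.span_induction with
    | mem y hy =>
      obtain ⟨t, rfl⟩ := hy
      have : traceFun π s * traceFun π t = -traceFun π (s * t) - traceFun π (s⁻¹ * t) := by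
        funext ρ; exact traceFun_key π s t ρ
      rw [this]
      exact sub_mem (neg_mem (Submodule.subset_span ⟨s * t, rfl⟩))
        (Submodule.subset_span ⟨s⁻¹ * t, rfl⟩)
    | zero => simp
    | add y z _ _ hy hz => rw [mul_add]; exact add_mem hy hz
    | smul c y _ hy => rw [mul_smul_comm]; exact Submodule.smul_mem _ c hy
  | zero => simp
  | add x y _ _ hx hy => rw [add_mul]; exact add_mem hx hy
  | smul c x _ hx => rw [smul_mul_assoc]; exact Submodule.smul_mem _ c hx
end

section
/- Let (α₁, α₂, α₃) ∈ [0,π]³. There exist A, B ∈ SU(2) such that α(A) = α₁, α(B) = α₂ and α(A·B) = α₃ if and only if |α₁ − α₂| ≤ α₃ ≤ min(α₁ + α₂, 2π − (α₁ + α₂)). -/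
/-!
Identify `SU(2)` with the unit quaternions, `A = cos α₁ + sin α₁ · u` and `B = cos α₂ + sin α₂ · v`
with `u, v` unit imaginary quaternions. Then `Re(tr AB)/2 = cos α₁ cos α₂ - sin α₁ sin α₂ ⟨u, v⟩`,
and as `⟨u, v⟩` ranges over `[-1, 1]` (Cauchy–Schwarz), `cos α₃` ranges over
`[cos (α₁ + α₂), cos (α₁ - α₂)]`. Since `cos` is strictly decreasing on `[0, π]`, this interval
condition is exactly the triangle inequalities.
-/

/-- The angle `α(U) = arccos(Re(tr U)/2) ∈ [0,π]` of a matrix `U`. -/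
noncomputable def suAngle (U : Matrix (Fin 2) (Fin 2) ℂ) : ℝ :=
  Real.arccos ((Matrix.trace U).re / 2)

section Trigonometry

open Real

lemma le_iff_cos_le_cos {x y : ℝ} (hx : x ∈ Set.Icc 0 π) (hy : y ∈ Set.Icc 0 π) :
    x ≤ y ↔ cos y ≤ cos x :=
  (strictAntiOn_cos.le_iff_ge hy hx).symm

variable {α₁ α₂ α₃ : ℝ}

lemma abs_sub_le_iff_cos_le_cos_sub (h₁ : α₁ ∈ Set.Icc 0 π) (h₂ : α₂ ∈ Set.Icc 0 π)
    (h₃ : α₃ ∈ Set.Icc 0 π) :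
    |α₁ - α₂| ≤ α₃ ↔ cos α₃ ≤ cos (α₁ - α₂) := by
  have hmem : |α₁ - α₂| ∈ Set.Icc 0 π :=
    ⟨abs_nonneg _, abs_sub_le_iff.2 ⟨by linarith [h₁.2, h₂.1], by linarith [h₁.1, h₂.2]⟩⟩
  rw [le_iff_cos_le_cos hmem h₃, cos_abs]

lemma le_min_iff_cos_add_le_cos (h₁ : α₁ ∈ Set.Icc 0 π) (h₂ : α₂ ∈ Set.Icc 0 π)
    (h₃ : α₃ ∈ Set.Icc 0 π) :
    α₃ ≤ min (α₁ + α₂) (2 * π - (α₁ + α₂)) ↔ cos (α₁ + α₂) ≤ cos α₃ := by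
  have hmem : min (α₁ + α₂) (2 * π - (α₁ + α₂)) ∈ Set.Icc 0 π := by
    constructor
    · exact le_min (by linarith [h₁.1, h₂.1]) (by linarith [h₁.2, h₂.2])
    · rcases le_total (α₁ + α₂) π with h | h
      · exact (min_le_left _ _).trans h
      · exact (min_le_right _ _).trans (by linarith)
  have hcos : cos (min (α₁ + α₂) (2 * π - (α₁ + α₂))) = cos (α₁ + α₂) := by
    rcases min_choice (α₁ + α₂) (2 * π - (α₁ + α₂)) with h | h <;> rw [h]
    exact cos_two_pi_sub _
  rw [le_iff_cos_le_cos h₃ hmem, hcos]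

lemma cos_mem_Icc_iff_sq_cos_sub_le (h₁ : α₁ ∈ Set.Icc 0 π) (h₂ : α₂ ∈ Set.Icc 0 π) :
    cos (α₁ + α₂) ≤ cos α₃ ∧ cos α₃ ≤ cos (α₁ - α₂) ↔
      (cos α₃ - cos α₁ * cos α₂) ^ 2 ≤ (1 - cos α₁ ^ 2) * (1 - cos α₂ ^ 2) := by
  have hsin : 0 ≤ sin α₁ * sin α₂ :=
    mul_nonneg (sin_nonneg_of_mem_Icc h₁) (sin_nonneg_of_mem_Icc h₂)
  rw [← sin_sq, ← sin_sq, ← mul_pow, sq_le_sq, abs_of_nonneg hsin, abs_le, cos_add, cos_sub]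
  constructor <;> rintro ⟨h, h'⟩ <;> constructor <;> linarith

lemma triangle_iff_sq_cos_sub_le (h₁ : α₁ ∈ Set.Icc 0 π) (h₂ : α₂ ∈ Set.Icc 0 π)
    (h₃ : α₃ ∈ Set.Icc 0 π) :
    (|α₁ - α₂| ≤ α₃ ∧ α₃ ≤ min (α₁ + α₂) (2 * π - (α₁ + α₂))) ↔
      (cos α₃ - cos α₁ * cos α₂) ^ 2 ≤ (1 - cos α₁ ^ 2) * (1 - cos α₂ ^ 2) := by
  rw [abs_sub_le_iff_cos_le_cos_sub h₁ h₂ h₃, le_min_iff_cos_add_le_cos h₁ h₂ h₃, and_comm,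
    cos_mem_Icc_iff_sq_cos_sub_le h₁ h₂]

end Trigonometry

section SpecialUnitary

open Complex Matrix ComplexConjugate

lemma of_mem_specialUnitaryGroup_fin_two_iff {a b c d : ℂ} :
    !![a, b; c, d] ∈ specialUnitaryGroup (Fin 2) ℂ ↔
      d = conj a ∧ c = -conj b ∧ normSq a + normSq b = 1 := by
  rw [← ofReal_inj, ofReal_add, ofReal_one, ← mul_conj, ← mul_conj]
  simp only [mem_specialUnitaryGroup_iff, mem_unitaryGroup_iff, cons_mul, empty_mul,
    Equiv.symm_apply_apply, ← ext_iff, of_apply, cons_val', vecMul, dotProduct, star_apply,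
    cons_val_fin_one, RCLike.star_def, Fin.sum_univ_two, Fin.isValue, cons_val_zero, cons_val_one,
    Fin.forall_fin_succ, cons_val_succ, IsEmpty.forall_iff, and_true, one_apply_eq,
    Fin.succ_zero_eq_one, ne_eq, zero_ne_one, not_false_eq_true, one_apply_ne, Fin.succ_ne_zero,
    det_fin_two]
  constructor
  · rintro ⟨⟨⟨h1, h2⟩, -, -⟩, hdet⟩
    have h2' : conj a * c + conj b * d = 0 := by simpa using congrArg conj h2
    refine ⟨?_, ?_, h1⟩
    · linear_combination (-d) * h1 + conj a * hdet + b * h2'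
    · linear_combination (-c) * h1 - conj b * hdet + a * h2'
  · rintro ⟨rfl, rfl, h⟩
    simp only [map_neg, conj_conj]
    refine ⟨⟨⟨h, by ring⟩, by ring, ?_⟩, ?_⟩ <;> linear_combination h

/-- The unit quaternion `a + b j` as a matrix. -/
def su2Matrix (a b : ℂ) : Matrix (Fin 2) (Fin 2) ℂ :=
  !![a, b; -conj b, conj a]

lemma su2Matrix_mem_specialUnitaryGroup_iff {a b : ℂ} :
    su2Matrix a b ∈ specialUnitaryGroup (Fin 2) ℂ ↔ normSq a + normSq b = 1 := by
  simp [su2Matrix, of_mem_specialUnitaryGroup_fin_two_iff]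

lemma exists_eq_su2Matrix {A : Matrix (Fin 2) (Fin 2) ℂ}
    (hA : A ∈ specialUnitaryGroup (Fin 2) ℂ) : ∃ a b, A = su2Matrix a b := by
  rw [eta_fin_two A] at hA ⊢
  obtain ⟨h11, h10, -⟩ := of_mem_specialUnitaryGroup_fin_two_iff.1 hA
  exact ⟨A 0 0, A 0 1, by rw [h11, h10, su2Matrix]⟩

lemma su2Matrix_mul_su2Matrix (a b c d : ℂ) :
    su2Matrix a b * su2Matrix c d = su2Matrix (a * c - b * conj d) (a * d + b * conj c) := by
  ext i j; fin_cases i <;> fin_cases j <;> simp [su2Matrix] <;> ring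

lemma re_trace_su2Matrix_div_two (a b : ℂ) : (su2Matrix a b).trace.re / 2 = a.re := by
  simp [su2Matrix, trace_fin_two]

lemma re_sq_le_one_of_normSq_add_normSq_eq_one {a b : ℂ} (h : normSq a + normSq b = 1) :
    a.re ^ 2 ≤ 1 := by
  rw [normSq_apply, normSq_apply] at h
  nlinarith [mul_self_nonneg a.im, mul_self_nonneg b.re, mul_self_nonneg b.im]

lemma cos_suAngle {U : Matrix (Fin 2) (Fin 2) ℂ} (hU : U ∈ specialUnitaryGroup (Fin 2) ℂ) :
    Real.cos (suAngle U) = U.trace.re / 2 := by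
  obtain ⟨a, b, rfl⟩ := exists_eq_su2Matrix hU
  have h := (sq_le_one_iff_abs_le_one _).1 <| re_sq_le_one_of_normSq_add_normSq_eq_one <|
    su2Matrix_mem_specialUnitaryGroup_iff.1 hU
  rw [suAngle, re_trace_su2Matrix_div_two, Real.cos_arccos (abs_le.1 h).1 (abs_le.1 h).2]

/-- Cauchy–Schwarz for the imaginary parts of the unit quaternions `a + b j` and `c + d j`. -/
lemma sq_re_mul_sub_re_mul_re_le {a b c d : ℂ} (hab : normSq a + normSq b = 1)
    (hcd : normSq c + normSq d = 1) :
    ((a * c - b * conj d).re - a.re * c.re) ^ 2 ≤ (1 - a.re ^ 2) * (1 - c.re ^ 2) := by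
  have hcs := Finset.sum_mul_sq_le_sq_mul_sq Finset.univ ![a.im, b.re, b.im] ![c.im, d.re, d.im]
  simp only [Fin.sum_univ_three, Matrix.cons_val] at hcs
  rw [normSq_apply, normSq_apply] at hab hcd
  have hre : (a * c - b * conj d).re - a.re * c.re =
      -(a.im * c.im + b.re * d.re + b.im * d.im) := by
    simp only [sub_re, mul_re, conj_re, conj_im]
    ring
  have ha : 1 - a.re ^ 2 = a.im ^ 2 + b.re ^ 2 + b.im ^ 2 := by linear_combination -hab
  have hc : 1 - c.re ^ 2 = c.im ^ 2 + d.re ^ 2 + d.im ^ 2 := by linear_combination -hcd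
  rwa [hre, neg_sq, ha, hc]

lemma sq_cos_suAngle_mul_sub_le {A B : Matrix (Fin 2) (Fin 2) ℂ}
    (hA : A ∈ specialUnitaryGroup (Fin 2) ℂ) (hB : B ∈ specialUnitaryGroup (Fin 2) ℂ) :
    (Real.cos (suAngle (A * B)) - Real.cos (suAngle A) * Real.cos (suAngle B)) ^ 2 ≤
      (1 - Real.cos (suAngle A) ^ 2) * (1 - Real.cos (suAngle B) ^ 2) := by
  rw [cos_suAngle hA, cos_suAngle hB, cos_suAngle (mul_mem hA hB)]
  obtain ⟨a, b, rfl⟩ := exists_eq_su2Matrix hA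
  obtain ⟨c, d, rfl⟩ := exists_eq_su2Matrix hB
  rw [su2Matrix_mul_su2Matrix]
  simp only [re_trace_su2Matrix_div_two]
  exact sq_re_mul_sub_re_mul_re_le (su2Matrix_mem_specialUnitaryGroup_iff.1 hA)
    (su2Matrix_mem_specialUnitaryGroup_iff.1 hB)

lemma exists_mem_specialUnitaryGroup_re_trace {x y z : ℝ} (hx : |x| ≤ 1) (hy : |y| ≤ 1)
    (h : (z - x * y) ^ 2 ≤ (1 - x ^ 2) * (1 - y ^ 2)) :
    ∃ A B : Matrix (Fin 2) (Fin 2) ℂ, A ∈ specialUnitaryGroup (Fin 2) ℂ ∧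
      B ∈ specialUnitaryGroup (Fin 2) ℂ ∧ A.trace.re / 2 = x ∧ B.trace.re / 2 = y ∧
      (A * B).trace.re / 2 = z := by
  have hx2 : 0 ≤ 1 - x ^ 2 := sub_nonneg.2 ((sq_le_one_iff_abs_le_one x).2 hx)
  have hy2 : 0 ≤ 1 - y ^ 2 := sub_nonneg.2 ((sq_le_one_iff_abs_le_one y).2 hy)
  -- `A = x + u i` and `B = y + w i + v j`, with `w` chosen so that `Re(AB) = x y - u w = z`.
  set u := √(1 - x ^ 2)
  set w := (x * y - z) / u with hw_def
  have hu : u ^ 2 = 1 - x ^ 2 := Real.sq_sqrt hx2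
  have hw : w ^ 2 ≤ 1 - y ^ 2 := by
    rw [hw_def, div_pow, hu, ← neg_sub, neg_sq]
    exact div_le_of_le_mul₀ hx2 hy2 (by linarith)
  have huw : u * w = x * y - z := by
    rcases eq_or_ne u 0 with hu0 | hu0
    · have : (z - x * y) ^ 2 ≤ 0 := by rw [← hu, hu0] at h; linarith
      rw [hu0, zero_mul]; nlinarith [sq_nonneg (z - x * y)]
    · exact mul_div_cancel₀ _ hu0
  set v := √(1 - y ^ 2 - w ^ 2)
  have hv : v ^ 2 = 1 - y ^ 2 - w ^ 2 := Real.sq_sqrt (by linarith)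
  refine ⟨su2Matrix ⟨x, u⟩ 0, su2Matrix ⟨y, w⟩ v, ?_, ?_, ?_, ?_, ?_⟩
  · rw [su2Matrix_mem_specialUnitaryGroup_iff, normSq_mk, map_zero]; linear_combination hu
  · rw [su2Matrix_mem_specialUnitaryGroup_iff, normSq_mk, normSq_ofReal]; linear_combination hv
  · exact re_trace_su2Matrix_div_two _ _
  · exact re_trace_su2Matrix_div_two _ _
  · rw [su2Matrix_mul_su2Matrix, re_trace_su2Matrix_div_two]
    simp only [zero_mul, sub_zero, mul_re]
    linear_combination -huw

end SpecialUnitary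

/-- Pair-of-pants case of the moment map image theorem: `(α₁,α₂,α₃) ∈ [0,π]³` arises as the
angles `(α(A), α(B), α(AB))` of matrices `A, B ∈ SU(2)` if and only if
`|α₁ - α₂| ≤ α₃ ≤ min(α₁ + α₂, 2π - (α₁ + α₂))`. -/
theorem su2_triangle_inequalities (α₁ α₂ α₃ : ℝ)
    (h₁ : α₁ ∈ Set.Icc (0 : ℝ) Real.pi) (h₂ : α₂ ∈ Set.Icc (0 : ℝ) Real.pi)
    (h₃ : α₃ ∈ Set.Icc (0 : ℝ) Real.pi) :
    (∃ A B : Matrix (Fin 2) (Fin 2) ℂ,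
        A ∈ Matrix.specialUnitaryGroup (Fin 2) ℂ ∧
        B ∈ Matrix.specialUnitaryGroup (Fin 2) ℂ ∧
        suAngle A = α₁ ∧ suAngle B = α₂ ∧ suAngle (A * B) = α₃) ↔
      |α₁ - α₂| ≤ α₃ ∧ α₃ ≤ min (α₁ + α₂) (2 * Real.pi - (α₁ + α₂)) := by
  rw [triangle_iff_sq_cos_sub_le h₁ h₂ h₃]
  constructor
  · rintro ⟨A, B, hA, hB, rfl, rfl, rfl⟩
    exact sq_cos_suAngle_mul_sub_le hA hB
  · intro h
    obtain ⟨A, B, hA, hB, hx, hy, hz⟩ := exists_mem_specialUnitaryGroup_re_trace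
      (Real.abs_cos_le_one α₁) (Real.abs_cos_le_one α₂) h
    refine ⟨A, B, hA, hB, ?_, ?_, ?_⟩
    · rw [suAngle, hx, Real.arccos_cos h₁.1 h₁.2]
    · rw [suAngle, hy, Real.arccos_cos h₂.1 h₂.2]
    · rw [suAngle, hz, Real.arccos_cos h₃.1 h₃.2]
end

section
/- Let V = ℂ² and n ≥ 2. Let Sym_k denote the space of symmetric k-multilinear maps V^k → ℂ. The linear map sending a pair (M, N) ∈ Sym_n ⊕ Sym_{n−2} to the n-multilinear map L defined by L(x₁, …, xₙ) = M(x₁, …, xₙ) + Σ_{i=1}^{n−1} ω(x_i, x_n) · N(x₁, …, x̂_i, …, x_{n−1}) (where x̂_i means x_i is omitted) is a linear isomorphism onto the subspace of n-multilinear maps Vⁿ → ℂ that are symmetric in their first n−1 arguments. -/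
/-!
Contract the last two slots of an `n`-linear map on `ℂ²`:
`c(L)(w) = L(w, e₀, e₁) - L(w, e₁, e₀)`. Every bilinear form on `ℂ²` satisfies
`β(u, v) - β(v, u) = ω(u, v) (β(e₀, e₁) - β(e₁, e₀))`, so `L` is invariant under swapping its last
two arguments exactly when `c(L) = 0`. The contraction kills symmetric maps and sends the
`ω`-term `P(N)` of a symmetric `N` to `n • N`: since `ω(a, e₁) e₀ - ω(a, e₀) e₁ = a`, each of the
`n - 2` mixed terms contributes `N(w)` and the term pairing the last two slots contributes
`2 N(w)`. So `N = c(L) / n` is recovered from `L = M + P(N)`. Conversely, if `L` is symmetric in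
its first `n - 1` arguments, `M = L - P(c(L) / n)` has `c(M) = 0`; the transposition of the last
two slots and the stabiliser of the last slot generate the whole symmetric group, so `M` is
symmetric.
-/

open Function Fin Equiv

namespace Fin

variable {k : ℕ} {α : Type*}

theorem exists_perm_succAbove_eq (σ : Perm (Fin (k + 1))) (i : Fin (k + 1)) :
    ∃ π : Perm (Fin k), ∀ j, σ (i.succAbove j) = (σ i).succAbove (π j) := by
  have h (j : Fin k) : ∃ l, (σ i).succAbove l = σ (i.succAbove j) :=
    exists_succAbove_eq (σ.injective.ne (succAbove_ne i j))
  choose π hπ using h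
  have hπ_inj : Injective π := fun a b hab =>
    succAbove_right_injective (σ.injective (by rw [← hπ, ← hπ, hab]))
  exact ⟨.ofBijective π hπ_inj.bijective_of_finite, fun j => (hπ j).symm⟩

theorem snoc_comp_viaFintypeEmbedding (σ : Perm (Fin k)) (y : Fin k → α) (a : α) :
    (snoc y a : Fin (k + 1) → α) ∘ σ.viaFintypeEmbedding castSuccEmb = snoc (y ∘ σ) a := by
  funext i
  cases i using lastCases with
  | last =>
    rw [comp_apply, σ.viaFintypeEmbedding_apply_notMem_range castSuccEmb (by simp [range_castSucc])]
    simp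
  | cast j =>
    have := σ.viaFintypeEmbedding_apply_image castSuccEmb j
    simp only [coe_castSuccEmb] at this
    simp [this]

theorem removeNth_castSucc_snoc (j : Fin (k + 1)) (w : Fin (k + 1) → α) (a : α) :
    removeNth (castSucc j) (snoc w a : Fin (k + 2) → α) = snoc (removeNth j w) a := by
  funext i
  cases i using lastCases with
  | last => simp [removeNth_apply]
  | cast l => simp [removeNth_apply, castSucc_succAbove_castSucc]

theorem snoc_snoc_comp_swap (w : Fin k → α) (u v : α) :
    (snoc (snoc w u) v : Fin (k + 2) → α) ∘ swap (castSucc (last k)) (last (k + 1)) =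
      snoc (snoc w v) u := by
  funext i
  cases i using lastCases with
  | last => simp
  | cast j =>
    cases j using lastCases with
    | last => simp
    | cast l =>
      rw [comp_apply, swap_apply_of_ne_of_ne]
      · simp
      · simp
      · exact castSucc_ne_last _

end Fin

namespace SymplecticDecomposition

variable {α β : Type*} {k : ℕ}

def IsSymmetric {ι : Type*} (f : (ι → α) → β) : Prop :=
  ∀ (σ : Perm ι) (x : ι → α), f (x ∘ σ) = f x

def IsSymmetricInit (f : (Fin (k + 1) → α) → β) : Prop :=
  ∀ τ : Perm (Fin (k + 1)), τ (last k) = last k → ∀ x, f (x ∘ τ) = f x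

theorem isSymmetricInit_iff {f : (Fin (k + 1) → α) → β} :
    IsSymmetricInit f ↔ ∀ a, IsSymmetric fun y => f (snoc y a) := by
  constructor
  · intro hf a σ y
    have hlast : σ.viaFintypeEmbedding castSuccEmb (last k) = last k :=
      σ.viaFintypeEmbedding_apply_notMem_range castSuccEmb (by simp [range_castSucc])
    simp only [← snoc_comp_viaFintypeEmbedding, hf _ hlast]
  · intro hf τ hτ x
    obtain ⟨π, hπ⟩ := exists_perm_succAbove_eq τ (last k)
    rw [hτ, succAbove_last] at hπ
    have hx : x ∘ τ = snoc (init x ∘ π) (x (last k)) := by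
      funext i
      cases i using lastCases with
      | last => simp [hτ]
      | cast j => simp [hπ, init]
    rw [hx]
    exact (hf (x (last k)) π (init x)).trans (congrArg f (snoc_init_self x))

theorem IsSymmetric.isSymmetricInit {f : (Fin (k + 1) → α) → β} (hf : IsSymmetric f) :
    IsSymmetricInit f :=
  fun τ _ x => hf τ x

theorem IsSymmetric.apply_insertNth {f : (Fin (k + 1) → α) → β} (hf : IsSymmetric f)
    (p : Fin (k + 1)) (a : α) (y : Fin k → α) : f (insertNth p a y) = f (cons a y) := by
  rw [← cons_comp_cycleRange, hf]

theorem IsSymmetric.apply_snoc_removeNth {f : (Fin (k + 1) → α) → β} (hf : IsSymmetric f)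
    (j : Fin (k + 1)) (w : Fin (k + 1) → α) : f (snoc (removeNth j w) (w j)) = f w := by
  rw [← insertNth_last', hf.apply_insertNth, ← hf.apply_insertNth j, insertNth_self_removeNth]

theorem IsSymmetric.apply_removeNth_comp {f : (Fin k → α) → β} (hf : IsSymmetric f)
    (σ : Perm (Fin (k + 1))) (i : Fin (k + 1)) (z : Fin (k + 1) → α) :
    f (removeNth i (z ∘ σ)) = f (removeNth (σ i) z) := by
  obtain ⟨π, hπ⟩ := exists_perm_succAbove_eq σ i
  have hz : removeNth i (z ∘ σ) = removeNth (σ i) z ∘ π := by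
    funext j
    simp [removeNth_apply, hπ]
  rw [hz, hf]

theorem IsSymmetric.of_isSymmetricInit_of_swap {f : (Fin (k + 2) → α) → β}
    (hinit : IsSymmetricInit f)
    (hswap : ∀ x, f (x ∘ swap (castSucc (last k)) (last (k + 1))) = f x) : IsSymmetric f := by
  intro τ x
  by_cases hτ : τ (last (k + 1)) = last (k + 1)
  · exact hinit τ hτ x
  set t := swap (castSucc (last k)) (last (k + 1))
  set σ := swap (τ (last (k + 1))) (castSucc (last k))
  have hσ : σ (last (k + 1)) = last (k + 1) :=
    swap_apply_of_ne_of_ne (Ne.symm hτ) (castSucc_ne_last _).symm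
  have hρ : (t * σ * τ) (last (k + 1)) = last (k + 1) := by
    simp [σ, t]
  have hτ_eq : x ∘ τ = ((x ∘ σ) ∘ t) ∘ (t * σ * τ) := by
    funext i
    simp [σ, t]
  rw [hτ_eq, hinit _ hρ, hswap, hinit σ hσ]

section OmegaLift

variable {R M : Type*} [CommRing R] [AddCommGroup M] [Module R M] (ω : M →ₗ[R] M →ₗ[R] R)
  {m : ℕ}

def omegaLift : MultilinearMap R (fun _ : Fin m => M) R →ₗ[R]
    MultilinearMap R (fun _ : Fin (m + 2) => M) R where
  toFun N := MultilinearMap.uncurryRight (M := fun _ => M) <|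
    ∑ p : Fin (m + 1), LinearMap.uncurryMid p
      { toFun := fun a => N.smulRight (ω a)
        map_add' := fun a b => by ext; simp
        map_smul' := fun c a => by ext; simp; ring }
  map_add' _ _ := MultilinearMap.ext fun _ => by
    simp [MultilinearMap.uncurryRight_apply, Finset.sum_add_distrib, add_mul]
  map_smul' _ _ := MultilinearMap.ext fun _ => by
    simp [MultilinearMap.uncurryRight_apply, Finset.mul_sum, mul_assoc]

theorem omegaLift_snoc (N : MultilinearMap R (fun _ : Fin m => M) R) (z : Fin (m + 1) → M)
    (v : M) : omegaLift ω N (snoc z v) = ∑ i, ω (z i) v * N (removeNth i z) := by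
  simp [omegaLift, MultilinearMap.uncurryRight_apply, mul_comm]

theorem omegaLift_apply (N : MultilinearMap R (fun _ : Fin m => M) R)
    (x : Fin (m + 2) → M) :
    omegaLift ω N x = ∑ i, ω (init x i) (x (last _)) * N (removeNth i (init x)) := by
  conv_lhs => rw [← snoc_init_self x]
  exact omegaLift_snoc ω N (init x) (x (last _))

theorem isSymmetricInit_omegaLift {N : MultilinearMap R (fun _ : Fin m => M) R}
    (hN : IsSymmetric N) : IsSymmetricInit (omegaLift ω N) := by
  refine isSymmetricInit_iff.2 fun v σ z => ?_
  simp only [omegaLift_snoc, comp_apply, hN.apply_removeNth_comp]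
  exact Equiv.sum_comp σ (fun i => ω (z i) v * N (removeNth i z))

end OmegaLift

section Plane

variable {R : Type*} [CommRing R] {m : ℕ}

def symplecticForm : (Fin 2 → R) →ₗ[R] (Fin 2 → R) →ₗ[R] R :=
  LinearMap.mk₂ R (fun u v => u 0 * v 1 - u 1 * v 0)
    (fun _ _ _ => by simp only [Pi.add_apply]; ring)
    (fun _ _ _ => by simp only [Pi.smul_apply, smul_eq_mul]; ring)
    (fun _ _ _ => by simp only [Pi.add_apply]; ring)
    (fun _ _ _ => by simp only [Pi.smul_apply, smul_eq_mul]; ring)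

local notation "ω" => symplecticForm (R := R)
local notation "e₀" => (Pi.single 0 1 : Fin 2 → R)
local notation "e₁" => (Pi.single 1 1 : Fin 2 → R)

@[simp]
theorem symplecticForm_apply (u v : Fin 2 → R) : ω u v = u 0 * v 1 - u 1 * v 0 := rfl

theorem symplecticForm_smul_sub_smul (a : Fin 2 → R) : ω a e₁ • e₀ - ω a e₀ • e₁ = a := by
  funext j; fin_cases j <;> simp

theorem sub_flip_eq_symplecticForm_mul (β : (Fin 2 → R) →ₗ[R] (Fin 2 → R) →ₗ[R] R)
    (u v : Fin 2 → R) : β u v - β v u = ω u v * (β e₀ e₁ - β e₁ e₀) := by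
  have hbasis (a : Fin 2 → R) : a = a 0 • e₀ + a 1 • e₁ := by
    funext j; fin_cases j <;> simp
  conv_lhs => rw [hbasis u, hbasis v]
  simp only [map_add, map_smul, LinearMap.add_apply, LinearMap.smul_apply, smul_eq_mul,
    symplecticForm_apply]
  ring

def contractLastTwo : MultilinearMap R (fun _ : Fin (m + 2) => Fin 2 → R) R →ₗ[R]
    MultilinearMap R (fun _ : Fin m => Fin 2 → R) R where
  toFun L := LinearMap.compMultilinearMap
    (LinearMap.applyₗ e₁ ∘ₗ LinearMap.applyₗ e₀ - LinearMap.applyₗ e₀ ∘ₗ LinearMap.applyₗ e₁)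
    L.curryRight.curryRight
  map_add' _ _ := MultilinearMap.ext fun _ => by simp; ring
  map_smul' _ _ := MultilinearMap.ext fun _ => by simp; ring

theorem contractLastTwo_apply (L : MultilinearMap R (fun _ : Fin (m + 2) => Fin 2 → R) R)
    (w : Fin m → Fin 2 → R) :
    contractLastTwo L w = L (snoc (snoc w e₀) e₁) - L (snoc (snoc w e₁) e₀) := by
  simp [contractLastTwo]

theorem apply_snoc_snoc_sub_swap (L : MultilinearMap R (fun _ : Fin (m + 2) => Fin 2 → R) R)
    (w : Fin m → Fin 2 → R) (u v : Fin 2 → R) :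
    L (snoc (snoc w u) v) - L (snoc (snoc w v) u) = ω u v * contractLastTwo L w := by
  simpa [contractLastTwo_apply] using
    sub_flip_eq_symplecticForm_mul (L.curryRight.curryRight w) u v

theorem IsSymmetric.symplecticForm_mul_sub {k : ℕ}
    {N : MultilinearMap R (fun _ : Fin (k + 1) => Fin 2 → R) R} (hN : IsSymmetric N)
    (w : Fin (k + 1) → Fin 2 → R) (j : Fin (k + 1)) :
    ω (w j) e₁ * N (removeNth (castSucc j) (snoc w e₀ : Fin (k + 2) → Fin 2 → R)) -
      ω (w j) e₀ * N (removeNth (castSucc j) (snoc w e₁ : Fin (k + 2) → Fin 2 → R)) = N w := by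
  have hlin := (N.curryRight (removeNth j w)).map_sub (ω (w j) e₁ • e₀) (ω (w j) e₀ • e₁)
  simp only [map_smul, MultilinearMap.curryRight_apply, smul_eq_mul,
    symplecticForm_smul_sub_smul] at hlin
  rw [removeNth_castSucc_snoc, removeNth_castSucc_snoc, ← hlin, hN.apply_snoc_removeNth]

variable {L : MultilinearMap R (fun _ : Fin (m + 2) => Fin 2 → R) R}
  {N : MultilinearMap R (fun _ : Fin m => Fin 2 → R) R}

theorem IsSymmetric.contractLastTwo_eq_zero (hL : IsSymmetric L) : contractLastTwo L = 0 := by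
  refine MultilinearMap.ext fun w => ?_
  rw [contractLastTwo_apply, ← snoc_snoc_comp_swap, hL, sub_self]
  rfl

theorem isSymmetric_contractLastTwo (hL : IsSymmetricInit L) :
    IsSymmetric (contractLastTwo L) := by
  have h (a b : Fin 2 → R) : IsSymmetric fun w => L (snoc (snoc w a) b) :=
    isSymmetricInit_iff.1 (isSymmetricInit_iff.1 hL b).isSymmetricInit a
  intro σ w
  simp only [contractLastTwo_apply]
  exact congrArg₂ (· - ·) (h e₀ e₁ σ w) (h e₁ e₀ σ w)

theorem contractLastTwo_omegaLift (hN : IsSymmetric N) :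
    contractLastTwo (omegaLift ω N) = ((m + 2 : ℕ) : R) • N := by
  refine MultilinearMap.ext fun w => ?_
  have hsum :
      ∑ j : Fin m, ω (w j) e₁ * N (removeNth (castSucc j) (snoc w e₀ : Fin (m + 1) → _)) -
      ∑ j : Fin m, ω (w j) e₀ * N (removeNth (castSucc j) (snoc w e₁ : Fin (m + 1) → _)) =
        m * N w := by
    rw [← Finset.sum_sub_distrib]
    rcases m with _ | k
    · simp
    · rw [Finset.sum_congr rfl fun j _ => hN.symplecticForm_mul_sub w j, Finset.sum_const,
        Finset.card_univ, Fintype.card_fin, nsmul_eq_mul]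
  rw [contractLastTwo_apply, omegaLift_snoc, omegaLift_snoc, sum_univ_castSucc, sum_univ_castSucc]
  have h01 : ω e₀ e₁ = 1 := by simp
  have h10 : ω e₁ e₀ = -1 := by simp
  simp only [snoc_castSucc, snoc_last, removeNth_last, init_snoc, h01, h10,
    smul_apply, smul_eq_mul]
  push_cast
  linear_combination hsum

theorem contractLastTwo_add_omegaLift {M : MultilinearMap R (fun _ : Fin (m + 2) => Fin 2 → R) R}
    (hM : IsSymmetric M) (hN : IsSymmetric N) :
    contractLastTwo (M + omegaLift ω N) = ((m + 2 : ℕ) : R) • N := by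
  rw [map_add, hM.contractLastTwo_eq_zero, contractLastTwo_omegaLift hN, zero_add]

theorem IsSymmetricInit.isSymmetric_of_contractLastTwo_eq_zero (hL : IsSymmetricInit L)
    (h0 : contractLastTwo L = 0) : IsSymmetric L := by
  refine .of_isSymmetricInit_of_swap hL fun x => ?_
  obtain ⟨w, u, v, rfl⟩ : ∃ w u v, x = snoc (snoc w u) v :=
    ⟨init (init x), init x (last _), x (last _), by rw [snoc_init_self, snoc_init_self]⟩
  rw [snoc_snoc_comp_swap, ← sub_eq_zero, apply_snoc_snoc_sub_swap, h0]
  simp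

end Plane

section Decomposition

variable {K : Type*} [Field K] [CharZero K] {m : ℕ}

local notation "ω" => symplecticForm (R := K)

theorem injOn_add_omegaLift :
    Set.InjOn (fun MN : MultilinearMap K (fun _ : Fin (m + 2) => Fin 2 → K) K ×
        MultilinearMap K (fun _ : Fin m => Fin 2 → K) K => MN.1 + omegaLift ω MN.2)
      {MN | IsSymmetric MN.1 ∧ IsSymmetric MN.2} := by
  rintro ⟨M, N⟩ ⟨hM, hN⟩ ⟨M', N'⟩ ⟨hM', hN'⟩ h
  have hN_eq : N = N' := by
    have := congrArg contractLastTwo h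
    rw [contractLastTwo_add_omegaLift hM hN, contractLastTwo_add_omegaLift hM' hN'] at this
    exact smul_right_injective _ (Nat.cast_ne_zero.2 (by omega)) this
  subst hN_eq
  exact Prod.ext (add_right_cancel h) rfl

theorem image_add_omegaLift :
    (fun MN : MultilinearMap K (fun _ : Fin (m + 2) => Fin 2 → K) K ×
        MultilinearMap K (fun _ : Fin m => Fin 2 → K) K => MN.1 + omegaLift ω MN.2) ''
      {MN | IsSymmetric MN.1 ∧ IsSymmetric MN.2} =
      {L : MultilinearMap K (fun _ : Fin (m + 2) => Fin 2 → K) K | IsSymmetricInit L} := by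
  ext L
  constructor
  · rintro ⟨⟨M, N⟩, ⟨hM, hN⟩, rfl⟩ τ hτ x
    simp [hM τ x, isSymmetricInit_omegaLift ω hN τ hτ x]
  · intro hL
    set N := ((m + 2 : ℕ) : K)⁻¹ • contractLastTwo L
    have hN : IsSymmetric N := fun σ w => by
      simp [N, isSymmetric_contractLastTwo hL σ w]
    have hM : IsSymmetric (L - omegaLift ω N) := by
      refine IsSymmetricInit.isSymmetric_of_contractLastTwo_eq_zero (fun τ hτ x => ?_) ?_
      · simp [hL τ hτ x, isSymmetricInit_omegaLift ω hN τ hτ x]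
      · rw [map_sub, contractLastTwo_omegaLift hN,
          smul_inv_smul₀ (Nat.cast_ne_zero.2 (by omega)), sub_self]
    exact ⟨(L - omegaLift ω N, N), ⟨hM, hN⟩, sub_add_cancel _ _⟩

end Decomposition

end SymplecticDecomposition

open SymplecticDecomposition

/-- The inductive step of Lemma 6.2: the linear map
`(M, N) ↦ (x ↦ M(x₁,…,xₙ) + Σᵢ ω(xᵢ, xₙ) N(x₁,…,x̂ᵢ,…,x_{n-1}))` restricts to a linear
isomorphism from `Sym_n ⊕ Sym_{n-2}` onto the space of `n`-multilinear maps `(ℂ²)ⁿ → ℂ`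
symmetric in their first `n-1` arguments. -/
theorem sym_plus_omega_iso (n : ℕ) (hn : 2 ≤ n) :
    let V := Fin 2 → ℂ
    let ω : V → V → ℂ := fun u v => u 0 * v 1 - u 1 * v 0
    let Φ : (MultilinearMap ℂ (fun _ : Fin n => V) ℂ ×
        MultilinearMap ℂ (fun _ : Fin (n - 2) => V) ℂ) → ((Fin n → V) → ℂ) :=
      fun MN x => MN.1 x + ∑ i : Fin (n - 1),
        ω (x ⟨i.1, by have := i.isLt; omega⟩) (x ⟨n - 1, by omega⟩) *
          MN.2 (fun j : Fin (n - 2) =>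
            if j.1 < i.1 then x ⟨j.1, by have := j.isLt; omega⟩
            else x ⟨j.1 + 1, by have := j.isLt; omega⟩)
    let Dom : Set (MultilinearMap ℂ (fun _ : Fin n => V) ℂ ×
        MultilinearMap ℂ (fun _ : Fin (n - 2) => V) ℂ) :=
      {MN | (∀ τ : Equiv.Perm (Fin n), ∀ y : Fin n → V, MN.1 (y ∘ τ) = MN.1 y) ∧
        (∀ τ : Equiv.Perm (Fin (n - 2)), ∀ y : Fin (n - 2) → V, MN.2 (y ∘ τ) = MN.2 y)}
    IsLinearMap ℂ Φ ∧ Set.InjOn Φ Dom ∧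
      Φ '' Dom = {f : (Fin n → V) → ℂ |
        ∃ L : MultilinearMap ℂ (fun _ : Fin n => V) ℂ,
          (∀ τ : Equiv.Perm (Fin n), τ ⟨n - 1, by omega⟩ = ⟨n - 1, by omega⟩ →
            ∀ x : Fin n → V, L (x ∘ τ) = L x) ∧ f = ⇑L} := by
  obtain ⟨m, rfl⟩ : ∃ m, n = m + 2 := ⟨n - 2, by omega⟩
  intro V ω Φ Dom
  have hΦ : Φ = fun MN => ⇑(MN.1 + omegaLift symplecticForm MN.2) := by
    funext MN x
    refine congrArg (MN.1 x + ·) ((omegaLift_apply _ _ x).trans ?_).symm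
    refine Finset.sum_congr rfl fun i _ => congrArg (_ * MN.2 ·) (funext fun j => ?_)
    simp only [removeNth_apply, init, succAbove, Fin.lt_def, val_castSucc]
    split_ifs <;> rfl
  refine ⟨⟨fun p q => ?_, fun c p => ?_⟩, ?_, ?_⟩
  · simp [hΦ, add_add_add_comm]
  · simp [hΦ, smul_add]
  · exact hΦ ▸ DFunLike.coe_injective.comp_injOn injOn_add_omegaLift
  · have himage := congrArg (Set.image DFunLike.coe) (image_add_omegaLift (K := ℂ) (m := m))
    rw [Set.image_image] at himage
    rw [hΦ]
    refine himage.trans (Set.ext fun f => ?_)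
    simp only [Set.mem_image, Set.mem_ofPred_eq]
    exact exists_congr fun L => and_congr Iff.rfl eq_comm
end
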